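/- arXiv:1709.06966 — 4 statements merged into one kernel-verified Lean document; each statement's English description precedes it below -/
import Mathlib

section
/- Let θ₁ > 0, θ₂ ≥ 0 and β > 0 be such that β(θ₁ − θ₂ − 1) < 2 < β(3θ₁ − θ₂ − 1). Then there exists a constant C, depending only on θ₁, θ₂ and β, such that for all 0 < t₁ < t₂ one has ∫₀^{t₁} ( ∫_ℝ |G_{t₂−s}(x) − G_{t₁−s}(x)|^{θ₁} |x|^{θ₂} dx )^{β} ds ≤ C (t₂ − t₁)^{1 − β(θ₁ − θ₂ − 1)/2}. -/
/-!
The inner integral `I(a, b) = ∫ |G_b - G_a|^θ₁ |x|^θ₂` obeys the parabolic scaling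
`I(c a, c b) = c^γ I(a, b)` with `γ = (θ₂ + 1 - θ₁)/2`, so after the substitution
`s = t₁ - δ v`, `δ = t₂ - t₁`, the left-hand side equals `δ^(1 + γβ) ∫₀^{t₁/δ} I(v, v + 1)^β dv`,
and it suffices that `v ↦ I(v, v + 1)^β` is integrable on `(0, ∞)`. Near `0`, bounding
`|G_b - G_a| ≤ max(G_a, G_b)` and scaling gives `I(v, v + 1) ≲ v^γ + (v + 1)^γ`, integrable
since `γβ > -1`. Near `∞`, scaling once more gives `I(v, v + 1) = v^γ I(1, 1 + 1/v)`, and the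
mean value theorem in time gives `|G_{1+h} - G_1| ≤ 8 h G_4` for `h ≤ 1`, so
`I(v, v + 1) ≲ v^(γ - θ₁)`, integrable since `(γ - θ₁)β < -1`.
-/

open MeasureTheory Real Filter

/-- The heat kernel on `ℝ`: `G t x = (4πt)^(-1/2) exp(-x²/(4t))`. -/
noncomputable def G (t x : ℝ) : ℝ :=
  (4 * Real.pi * t) ^ (-(1:ℝ)/2) * Real.exp (-x ^ 2 / (4 * t))

open Set

lemma Real.add_rpow_le_two_rpow_mul_rpow_add_rpow {x y p : ℝ} (hx : 0 ≤ x) (hy : 0 ≤ y)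
    (hp : 0 ≤ p) : (x + y) ^ p ≤ 2 ^ p * (x ^ p + y ^ p) := calc
  (x + y) ^ p ≤ (2 * max x y) ^ p := by gcongr; rw [two_mul]; gcongr <;> simp
  _ = 2 ^ p * max (x ^ p) (y ^ p) := by
    rw [mul_rpow zero_le_two (le_max_of_le_left hx),
      (monotoneOn_rpow_Ici_of_exponent_nonneg hp).map_max hx hy]
  _ ≤ 2 ^ p * (x ^ p + y ^ p) := by
    gcongr; exact max_le_add_of_nonneg (rpow_nonneg hx p) (rpow_nonneg hy p)

lemma integrable_abs_rpow_mul_exp_neg_mul_sq {b s : ℝ} (hb : 0 < b) (hs : -1 < s) :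
    Integrable fun x : ℝ => |x| ^ s * exp (-b * x ^ 2) := by
  have hIoi : IntegrableOn (fun x : ℝ => |x| ^ s * exp (-b * x ^ 2)) (Ioi 0) :=
    (integrableOn_rpow_mul_exp_neg_mul_sq hb hs).congr_fun
      (fun x hx => by rw [abs_of_pos (mem_Ioi.mp hx)]) measurableSet_Ioi
  rw [← integrableOn_univ, ← Iio_union_Ici (a := (0:ℝ)), integrableOn_union,
    integrableOn_Ici_iff_integrableOn_Ioi]
  refine ⟨?_, hIoi⟩
  rw [← (Measure.measurePreserving_neg (volume : Measure ℝ)).integrableOn_comp_preimage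
      (Homeomorph.neg ℝ).measurableEmbedding]
  simpa [Function.comp_def] using hIoi

lemma intervalIntegral_le_setIntegral_Ioi_of_le {f g : ℝ → ℝ} {T : ℝ} (hT : 0 ≤ T)
    (hg : IntegrableOn g (Ioi 0)) (hf : ∀ v ∈ Ioi 0, 0 ≤ f v) (hfg : ∀ v ∈ Ioi 0, f v ≤ g v) :
    ∫ v in 0..T, f v ≤ ∫ v in Ioi 0, g v := by
  rw [intervalIntegral.integral_of_le hT]
  calc ∫ v in Ioc 0 T, f v ≤ ∫ v in Ioc 0 T, g v :=
        integral_mono_of_nonneg ((ae_restrict_iff' measurableSet_Ioc).2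
          (Eventually.of_forall fun v hv => hf v hv.1)) (hg.mono_set Ioc_subset_Ioi_self)
          ((ae_restrict_iff' measurableSet_Ioc).2 (Eventually.of_forall fun v hv => hfg v hv.1))
    _ ≤ ∫ v in Ioi 0, g v :=
        setIntegral_mono_set hg ((ae_restrict_iff' measurableSet_Ioi).2
          (Eventually.of_forall fun v hv => (hf v hv).trans (hfg v hv)))
          Ioc_subset_Ioi_self.eventuallyLE

lemma exists_forall_intervalIntegral_le_of_le_rpow {f : ℝ → ℝ} {p q A B : ℝ} (hp : -1 < p)
    (hq : q < -1) (hf : ∀ v ∈ Ioi 0, 0 ≤ f v)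
    (hnear : ∀ v ∈ Ioc 0 1, f v ≤ A * (v ^ p + (v + 1) ^ p))
    (hfar : ∀ v ∈ Ioi 1, f v ≤ B * v ^ q) :
    ∃ C, ∀ T, 0 ≤ T → ∫ v in 0..T, f v ≤ C := by
  set near : ℝ → ℝ := fun v => A * (v ^ p + (v + 1) ^ p)
  set far : ℝ → ℝ := fun v => B * v ^ q
  have hshift : IntervalIntegrable (fun v : ℝ => (v + 1) ^ p) volume 0 1 := by
    simpa [show (2:ℝ) - 1 = 1 by norm_num] using
      (intervalIntegral.intervalIntegrable_rpow' (a := 1) (b := 2) hp).comp_add_right 1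
  have hnear_int : IntegrableOn near (Ioc 0 1) :=
    (((intervalIntegral.intervalIntegrable_rpow' hp).add hshift).const_mul A).1
  have hfar_int : IntegrableOn far (Ioi 1) := (integrableOn_Ioi_rpow_of_lt hq one_pos).const_mul B
  refine ⟨∫ v in Ioi 0, (Ioc 0 1).indicator near v + (Ioi 1).indicator far v,
    fun T hT => intervalIntegral_le_setIntegral_Ioi_of_le hT ?_ hf fun v hv => ?_⟩
  · exact ((hnear_int.integrable_indicator measurableSet_Ioc).add
      (hfar_int.integrable_indicator measurableSet_Ioi)).integrableOn
  · rcases le_or_gt v 1 with hv1 | hv1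
    · rw [indicator_of_mem (show v ∈ Ioc 0 1 from ⟨hv, hv1⟩),
        indicator_of_notMem (show v ∉ Ioi 1 from not_lt.2 hv1), add_zero]
      exact hnear v ⟨hv, hv1⟩
    · rw [indicator_of_notMem (show v ∉ Ioc 0 1 from fun h => hv1.not_ge h.2),
        indicator_of_mem (show v ∈ Ioi 1 from hv1), zero_add]
      exact hfar v hv1

lemma G_nonneg {t : ℝ} (ht : 0 ≤ t) (x : ℝ) : 0 ≤ G t x := by unfold G; positivity

lemma G_rpow {t : ℝ} (ht : 0 ≤ t) (θ x : ℝ) :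
    G t x ^ θ = ((4 * π * t) ^ (-(1:ℝ)/2)) ^ θ * exp (-(θ / (4 * t)) * x ^ 2) := by
  rw [G, mul_rpow (by positivity) (exp_pos _).le, ← exp_mul]
  congr 2
  ring

lemma G_scale {c t : ℝ} (hc : 0 < c) (ht : 0 ≤ t) (x : ℝ) :
    G (c * t) x = (√c)⁻¹ * G t (x / √c) := by
  rw [G, G, show 4 * π * (c * t) = c * (4 * π * t) by ring, mul_rpow hc.le (by positivity),
    div_pow, sq_sqrt hc.le, sqrt_eq_rpow, ← rpow_neg_one, ← rpow_mul hc.le, mul_assoc,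
    show -(x ^ 2 / c) / (4 * t) = -x ^ 2 / (4 * (c * t)) by ring]
  norm_num

lemma hasDerivAt_G {t : ℝ} (ht : 0 < t) (x : ℝ) :
    HasDerivAt (fun s => G s x) (G t x * (x ^ 2 / (4 * t ^ 2) - 1 / (2 * t))) t := by
  have h4πt : 0 < 4 * π * t := by positivity
  have hprefactor := (((hasDerivAt_id' t).const_mul (4 * π)).rpow_const (p := -(1:ℝ)/2)
    (Or.inl h4πt.ne'))
  have hexponent := ((hasDerivAt_inv ht.ne').const_mul (-x ^ 2 / 4)).exp
  have hG : (fun s => G s x) = fun s => (4 * π * s) ^ (-(1:ℝ)/2) * exp (-x ^ 2 / 4 * s⁻¹) := by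
    ext s; rw [G, div_mul_eq_div_div, div_eq_mul_inv _ s]
  rw [hG]
  refine (hprefactor.mul hexponent).congr_deriv ?_
  rw [G, rpow_sub_one h4πt.ne']
  field_simp
  ring

lemma abs_deriv_G_le {ρ : ℝ} (hρ₁ : 1 ≤ ρ) (hρ₂ : ρ ≤ 2) (x : ℝ) :
    |G ρ x * (x ^ 2 / (4 * ρ ^ 2) - 1 / (2 * ρ))| ≤ 8 * G 4 x := by
  have hρ : 0 < ρ := by linarith
  set E := exp (-x ^ 2 / (4 * 4))
  have hprefactor : (4 * π * ρ) ^ (-(1:ℝ)/2) ≤ 2 * (4 * π * 4) ^ (-(1:ℝ)/2) := by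
    have h4 : (4:ℝ) ^ (-(1:ℝ)/2) = 1 / 2 := by
      rw [show (4:ℝ) = 2 ^ (2:ℝ) by norm_num, ← rpow_mul zero_le_two]; norm_num
    rw [mul_rpow (x := 4 * π) (y := 4) (by positivity) (by norm_num), h4]
    calc (4 * π * ρ) ^ (-(1:ℝ)/2) ≤ (4 * π * 1) ^ (-(1:ℝ)/2) :=
          rpow_le_rpow_of_nonpos (by positivity) (by gcongr) (by norm_num)
      _ = _ := by ring_nf
  have hgauss : exp (-x ^ 2 / (4 * ρ)) ≤ E * E := by
    rw [← exp_add, exp_le_exp]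
    have : x ^ 2 / 8 ≤ x ^ 2 / (4 * ρ) := by gcongr; linarith
    linarith [neg_div (4 * ρ) (x ^ 2)]
  have hpoly : |x ^ 2 / (4 * ρ ^ 2) - 1 / (2 * ρ)| * E ≤ 4 := by
    have hsum : |x ^ 2 / (4 * ρ ^ 2) - 1 / (2 * ρ)| ≤ x ^ 2 / 4 + 1 / 2 := by
      refine (abs_sub _ _).trans ?_
      rw [abs_of_nonneg (by positivity), abs_of_nonneg (by positivity)]
      gcongr
      · nlinarith
      · linarith
    have hexp : E * exp (x ^ 2 / (4 * 4)) = 1 := by rw [← exp_add]; ring_nf; exact exp_zero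
    nlinarith [add_one_le_exp (x ^ 2 / (4 * 4)), exp_pos (-x ^ 2 / (4 * 4))]
  calc |G ρ x * (x ^ 2 / (4 * ρ ^ 2) - 1 / (2 * ρ))|
      = (4 * π * ρ) ^ (-(1:ℝ)/2) * exp (-x ^ 2 / (4 * ρ))
          * |x ^ 2 / (4 * ρ ^ 2) - 1 / (2 * ρ)| := by
        rw [abs_mul, abs_of_nonneg (G_nonneg hρ.le x), G]
    _ ≤ 2 * (4 * π * 4) ^ (-(1:ℝ)/2) * (E * E) * |x ^ 2 / (4 * ρ ^ 2) - 1 / (2 * ρ)| := by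
        gcongr
    _ = 2 * (4 * π * 4) ^ (-(1:ℝ)/2) * E * (|x ^ 2 / (4 * ρ ^ 2) - 1 / (2 * ρ)| * E) := by ring
    _ ≤ 2 * (4 * π * 4) ^ (-(1:ℝ)/2) * E * 4 := by gcongr
    _ = 8 * G 4 x := by rw [G]; ring

lemma abs_G_one_add_sub_G_one_le {h : ℝ} (h0 : 0 ≤ h) (h1 : h ≤ 1) (x : ℝ) :
    |G (1 + h) x - G 1 x| ≤ 8 * G 4 x * h := by
  have hmvt := norm_image_sub_le_of_norm_deriv_le_segment' (f := fun s => G s x)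
    (fun ρ hρ => (hasDerivAt_G (by linarith [hρ.1]) x).hasDerivWithinAt)
    (fun ρ hρ => abs_deriv_G_le hρ.1 (by linarith [hρ.2]) x) (1 + h) ⟨by linarith, le_rfl⟩
  simpa only [Real.norm_eq_abs, add_sub_cancel_left] using hmvt

noncomputable def weightedIntegral (θ₁ θ₂ : ℝ) (f : ℝ → ℝ) : ℝ :=
  ∫ x, |f x| ^ θ₁ * |x| ^ θ₂

section weightedIntegral

variable {θ₁ θ₂ : ℝ}

lemma weightedIntegral_nonneg (f : ℝ → ℝ) : 0 ≤ weightedIntegral θ₁ θ₂ f :=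
  integral_nonneg fun _ => by positivity

lemma weightedIntegral_dilation {r : ℝ} (hr : 0 < r) (f : ℝ → ℝ) :
    weightedIntegral θ₁ θ₂ (fun x => r⁻¹ * f (x / r))
      = r ^ (θ₂ + 1 - θ₁) * weightedIntegral θ₁ θ₂ f := by
  have hpt : ∀ x, |r⁻¹ * f (x / r)| ^ θ₁ * |x| ^ θ₂
      = r ^ (θ₂ - θ₁) * (|f (x / r)| ^ θ₁ * |x / r| ^ θ₂) := fun x => by
    rw [abs_mul, abs_div, abs_inv, abs_of_pos hr, mul_rpow (by positivity) (abs_nonneg _),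
      div_rpow (abs_nonneg _) hr.le, inv_rpow hr.le, rpow_sub hr]
    field_simp
  simp only [weightedIntegral, hpt, integral_const_mul,
    Measure.integral_comp_div (fun y => |f y| ^ θ₁ * |y| ^ θ₂), abs_of_pos hr, smul_eq_mul]
  rw [← mul_assoc, ← rpow_add_one hr.ne']
  ring_nf

lemma weightedIntegral_le_of_abs_le_mul (hθ₁ : 0 ≤ θ₁) {c : ℝ} (hc : 0 ≤ c) {f g : ℝ → ℝ}
    (hg : Integrable fun x => |g x| ^ θ₁ * |x| ^ θ₂) (hfg : ∀ x, |f x| ≤ c * |g x|) :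
    weightedIntegral θ₁ θ₂ f ≤ c ^ θ₁ * weightedIntegral θ₁ θ₂ g := by
  refine (integral_mono_of_nonneg (Eventually.of_forall fun _ => by positivity)
    (hg.const_mul (c ^ θ₁)) (Eventually.of_forall fun x => ?_)).trans_eq (integral_const_mul _ _)
  calc |f x| ^ θ₁ * |x| ^ θ₂ ≤ (c * |g x|) ^ θ₁ * |x| ^ θ₂ := by gcongr; exact hfg x
    _ = c ^ θ₁ * (|g x| ^ θ₁ * |x| ^ θ₂) := by rw [mul_rpow hc (abs_nonneg _), mul_assoc]

lemma weightedIntegral_sub_le_add (hθ₁ : 0 ≤ θ₁) {f g : ℝ → ℝ} (hf0 : ∀ x, 0 ≤ f x)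
    (hg0 : ∀ x, 0 ≤ g x) (hf : Integrable fun x => |f x| ^ θ₁ * |x| ^ θ₂)
    (hg : Integrable fun x => |g x| ^ θ₁ * |x| ^ θ₂) :
    weightedIntegral θ₁ θ₂ (f - g) ≤ weightedIntegral θ₁ θ₂ f + weightedIntegral θ₁ θ₂ g := by
  refine (integral_mono_of_nonneg (Eventually.of_forall fun _ => by positivity) (hf.add hg)
    (Eventually.of_forall fun x => ?_)).trans_eq (integral_add hf hg)
  have hmax : |f x - g x| ≤ max |f x| |g x| := by
    rw [abs_of_nonneg (hf0 x), abs_of_nonneg (hg0 x)]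
    exact abs_sub_le_of_nonneg_of_le (hf0 x) (le_max_left _ _) (hg0 x) (le_max_right _ _)
  calc |(f - g) x| ^ θ₁ * |x| ^ θ₂ ≤ max |f x| |g x| ^ θ₁ * |x| ^ θ₂ := by
        dsimp only [Pi.sub_apply]; gcongr
    _ ≤ (|f x| ^ θ₁ + |g x| ^ θ₁) * |x| ^ θ₂ := by
        rw [(monotoneOn_rpow_Ici_of_exponent_nonneg hθ₁).map_max (abs_nonneg (f x))
          (abs_nonneg (g x))]
        gcongr
        exact max_le_add_of_nonneg (by positivity) (by positivity)
    _ = _ := add_mul _ _ _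

end weightedIntegral

section G

variable {θ₁ θ₂ β : ℝ}

lemma integrable_abs_G_rpow_mul_abs_rpow (hθ₁ : 0 < θ₁) (hθ₂ : -1 < θ₂) {t : ℝ} (ht : 0 < t) :
    Integrable fun x => |G t x| ^ θ₁ * |x| ^ θ₂ := by
  refine ((integrable_abs_rpow_mul_exp_neg_mul_sq (b := θ₁ / (4 * t)) (by positivity) hθ₂).const_mul
    (((4 * π * t) ^ (-(1:ℝ)/2)) ^ θ₁)).congr (Eventually.of_forall fun x => ?_)
  simp only [abs_of_nonneg (G_nonneg ht.le x), G_rpow ht.le, neg_mul]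
  ring

lemma weightedIntegral_G_scale {c t : ℝ} (hc : 0 < c) (ht : 0 ≤ t) :
    weightedIntegral θ₁ θ₂ (G (c * t))
      = c ^ ((θ₂ + 1 - θ₁) / 2) * weightedIntegral θ₁ θ₂ (G t) := by
  simp only [funext (G_scale hc ht), weightedIntegral_dilation (sqrt_pos.2 hc),
    rpow_div_two_eq_sqrt _ hc.le]

lemma weightedIntegral_G_sub_G_scale {c a b : ℝ} (hc : 0 < c) (ha : 0 ≤ a) (hb : 0 ≤ b) :
    weightedIntegral θ₁ θ₂ (G (c * b) - G (c * a))
      = c ^ ((θ₂ + 1 - θ₁) / 2) * weightedIntegral θ₁ θ₂ (G b - G a) := by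
  have : G (c * b) - G (c * a) = fun x => (√c)⁻¹ * (G b - G a) (x / √c) := by
    ext x; simp only [Pi.sub_apply, G_scale hc ha, G_scale hc hb, mul_sub]
  rw [this, weightedIntegral_dilation (sqrt_pos.2 hc), rpow_div_two_eq_sqrt _ hc.le]

lemma weightedIntegral_G_one_add_sub_G_one_le (hθ₁ : 0 < θ₁) (hθ₂ : -1 < θ₂) {h : ℝ} (h0 : 0 ≤ h)
    (h1 : h ≤ 1) :
    weightedIntegral θ₁ θ₂ (G (1 + h) - G 1) ≤ (8 * h) ^ θ₁ * weightedIntegral θ₁ θ₂ (G 4) :=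
  weightedIntegral_le_of_abs_le_mul hθ₁.le (by positivity)
    (integrable_abs_G_rpow_mul_abs_rpow hθ₁ hθ₂ (by norm_num)) fun x => by
      rw [Pi.sub_apply, abs_of_nonneg (G_nonneg (by norm_num) x)]
      linarith [abs_G_one_add_sub_G_one_le h0 h1 x]

lemma weightedIntegral_G_add_one_sub_G_le (hθ₁ : 0 < θ₁) (hθ₂ : -1 < θ₂) {v : ℝ} (hv : 0 < v) :
    weightedIntegral θ₁ θ₂ (G (v + 1) - G v)
      ≤ weightedIntegral θ₁ θ₂ (G 1)
        * (v ^ ((θ₂ + 1 - θ₁) / 2) + (v + 1) ^ ((θ₂ + 1 - θ₁) / 2)) := by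
  have hscale : ∀ t, 0 < t → weightedIntegral θ₁ θ₂ (G t)
      = t ^ ((θ₂ + 1 - θ₁) / 2) * weightedIntegral θ₁ θ₂ (G 1) := fun t ht => by
    simpa only [mul_one] using weightedIntegral_G_scale (θ₁ := θ₁) (θ₂ := θ₂) ht zero_le_one
  have hsum := weightedIntegral_sub_le_add (θ₂ := θ₂) (f := G (v + 1)) (g := G v) hθ₁.le
    (G_nonneg (by linarith)) (G_nonneg hv.le)
    (integrable_abs_G_rpow_mul_abs_rpow hθ₁ hθ₂ (by linarith))
    (integrable_abs_G_rpow_mul_abs_rpow hθ₁ hθ₂ hv)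
  rw [hscale _ hv, hscale _ (by linarith)] at hsum
  linarith

lemma weightedIntegral_G_add_one_sub_G_le_of_one_le (hθ₁ : 0 < θ₁) (hθ₂ : -1 < θ₂) {v : ℝ}
    (hv : 1 ≤ v) :
    weightedIntegral θ₁ θ₂ (G (v + 1) - G v)
      ≤ 8 ^ θ₁ * weightedIntegral θ₁ θ₂ (G 4) * v ^ ((θ₂ + 1 - θ₁) / 2 - θ₁) := by
  have hv0 : 0 < v := by linarith
  have hv' : v⁻¹ ≤ 1 := inv_le_one_of_one_le₀ hv
  rw [show v + 1 = v * (1 + v⁻¹) by field_simp, show G v = G (v * 1) by rw [mul_one],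
    weightedIntegral_G_sub_G_scale hv0 zero_le_one (by positivity), rpow_sub hv0]
  calc v ^ ((θ₂ + 1 - θ₁) / 2) * weightedIntegral θ₁ θ₂ (G (1 + v⁻¹) - G 1)
      ≤ v ^ ((θ₂ + 1 - θ₁) / 2) * ((8 * v⁻¹) ^ θ₁ * weightedIntegral θ₁ θ₂ (G 4)) := by
        gcongr
        exact weightedIntegral_G_one_add_sub_G_one_le hθ₁ hθ₂ (by positivity) hv'
    _ = _ := by
        rw [mul_rpow (by norm_num) (inv_nonneg.2 hv0.le), inv_rpow hv0.le]
        field_simp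

lemma exists_forall_intervalIntegral_weightedIntegral_G_add_one_sub_G_rpow_le
    (hθ₁ : 0 < θ₁) (hθ₂ : -1 < θ₂) (hβ : 0 ≤ β) (hnear : -1 < (θ₂ + 1 - θ₁) / 2 * β)
    (hfar : ((θ₂ + 1 - θ₁) / 2 - θ₁) * β < -1) :
    ∃ C, ∀ T, 0 ≤ T → ∫ v in 0..T, weightedIntegral θ₁ θ₂ (G (v + 1) - G v) ^ β ≤ C := by
  set γ := (θ₂ + 1 - θ₁) / 2
  have hM₁ := weightedIntegral_nonneg (θ₁ := θ₁) (θ₂ := θ₂) (G 1)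
  have hM₄ := weightedIntegral_nonneg (θ₁ := θ₁) (θ₂ := θ₂) (G 4)
  refine exists_forall_intervalIntegral_le_of_le_rpow
    (A := (2 * weightedIntegral θ₁ θ₂ (G 1)) ^ β) (B := (8 ^ θ₁ * weightedIntegral θ₁ θ₂ (G 4)) ^ β)
    hnear hfar (fun v _ => rpow_nonneg (weightedIntegral_nonneg _) _) (fun v hv => ?_)
    (fun v hv => ?_)
  · have hv0 : 0 < v := hv.1
    calc weightedIntegral θ₁ θ₂ (G (v + 1) - G v) ^ β
        ≤ (weightedIntegral θ₁ θ₂ (G 1) * (v ^ γ + (v + 1) ^ γ)) ^ β :=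
          rpow_le_rpow (weightedIntegral_nonneg _)
            (weightedIntegral_G_add_one_sub_G_le hθ₁ hθ₂ hv0) hβ
      _ ≤ weightedIntegral θ₁ θ₂ (G 1) ^ β * (2 ^ β * ((v ^ γ) ^ β + ((v + 1) ^ γ) ^ β)) := by
          rw [mul_rpow hM₁ (by positivity)]
          gcongr
          exact add_rpow_le_two_rpow_mul_rpow_add_rpow (by positivity) (by positivity) hβ
      _ = (2 * weightedIntegral θ₁ θ₂ (G 1)) ^ β * (v ^ (γ * β) + (v + 1) ^ (γ * β)) := by
          rw [← rpow_mul hv0.le, ← rpow_mul (by positivity), mul_rpow zero_le_two hM₁]; ring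
  · have hv1 : (1:ℝ) ≤ v := le_of_lt hv
    calc weightedIntegral θ₁ θ₂ (G (v + 1) - G v) ^ β
        ≤ (8 ^ θ₁ * weightedIntegral θ₁ θ₂ (G 4) * v ^ (γ - θ₁)) ^ β :=
          rpow_le_rpow (weightedIntegral_nonneg _)
            (weightedIntegral_G_add_one_sub_G_le_of_one_le hθ₁ hθ₂ hv1) hβ
      _ = (8 ^ θ₁ * weightedIntegral θ₁ θ₂ (G 4)) ^ β * v ^ ((γ - θ₁) * β) := by
          rw [mul_rpow (by positivity) (by positivity), ← rpow_mul (by linarith)]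

lemma integral_weightedIntegral_G_sub_G_rpow_eq {t₁ t₂ : ℝ} (ht₁ : 0 ≤ t₁) (ht : t₁ < t₂) :
    ∫ s in 0..t₁, weightedIntegral θ₁ θ₂ (G (t₂ - s) - G (t₁ - s)) ^ β
      = (t₂ - t₁) ^ (1 + (θ₂ + 1 - θ₁) / 2 * β)
        * ∫ v in 0..t₁ / (t₂ - t₁), weightedIntegral θ₁ θ₂ (G (v + 1) - G v) ^ β := by
  have hδ : 0 < t₂ - t₁ := sub_pos.2 ht
  have hscale : ∀ u ∈ uIcc 0 t₁, weightedIntegral θ₁ θ₂ (G (u + (t₂ - t₁)) - G u) ^ β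
      = (t₂ - t₁) ^ ((θ₂ + 1 - θ₁) / 2 * β)
        * weightedIntegral θ₁ θ₂ (G (u / (t₂ - t₁) + 1) - G (u / (t₂ - t₁))) ^ β := by
    intro u hu
    have hu0 : 0 ≤ u := by rw [uIcc_of_le ht₁] at hu; exact hu.1
    rw [show u + (t₂ - t₁) = (t₂ - t₁) * (u / (t₂ - t₁) + 1) by field_simp,
      show G u = G ((t₂ - t₁) * (u / (t₂ - t₁))) by field_simp,
      weightedIntegral_G_sub_G_scale hδ (by positivity) (by positivity),
      mul_rpow (by positivity) (weightedIntegral_nonneg _), ← rpow_mul hδ.le]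
  have hreflect := intervalIntegral.integral_comp_sub_left (a := 0) (b := t₁)
    (fun u => weightedIntegral θ₁ θ₂ (G (u + (t₂ - t₁)) - G u) ^ β) t₁
  simp only [sub_add_sub_cancel', sub_self, sub_zero] at hreflect
  rw [hreflect, intervalIntegral.integral_congr hscale, intervalIntegral.integral_const_mul,
    intervalIntegral.integral_comp_div (fun v => weightedIntegral θ₁ θ₂ (G (v + 1) - G v) ^ β)
      hδ.ne', zero_div, smul_eq_mul, rpow_add hδ, rpow_one, mul_left_comm, mul_assoc]

theorem heat_kernel_time_increment_estimate
    (θ₁ θ₂ β : ℝ) (hθ₁ : 0 < θ₁) (hθ₂ : 0 ≤ θ₂) (hβ : 0 < β)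
    (h1 : β * (θ₁ - θ₂ - 1) < 2) (h2 : 2 < β * (3 * θ₁ - θ₂ - 1)) :
    ∃ C : ℝ, 0 < C ∧ ∀ t₁ t₂ : ℝ, 0 < t₁ → t₁ < t₂ →
      ∫ s in (0:ℝ)..t₁,
          (∫ x : ℝ, |G (t₂ - s) x - G (t₁ - s) x| ^ θ₁ * |x| ^ θ₂) ^ β
        ≤ C * (t₂ - t₁) ^ (1 - β * (θ₁ - θ₂ - 1) / 2) := by
  obtain ⟨C, hC⟩ := exists_forall_intervalIntegral_weightedIntegral_G_add_one_sub_G_rpow_le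
    (θ₂ := θ₂) (β := β) hθ₁ (by linarith) hβ.le (by linarith) (by linarith)
  refine ⟨max C 1, by positivity, fun t₁ t₂ ht₁ ht => ?_⟩
  calc ∫ s in (0:ℝ)..t₁, weightedIntegral θ₁ θ₂ (G (t₂ - s) - G (t₁ - s)) ^ β
      = (t₂ - t₁) ^ (1 + (θ₂ + 1 - θ₁) / 2 * β)
        * ∫ v in 0..t₁ / (t₂ - t₁), weightedIntegral θ₁ θ₂ (G (v + 1) - G v) ^ β :=
        integral_weightedIntegral_G_sub_G_rpow_eq ht₁.le ht
    _ ≤ (t₂ - t₁) ^ (1 + (θ₂ + 1 - θ₁) / 2 * β) * max C 1 := by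
        gcongr
        exact (hC _ (by positivity)).trans (le_max_left _ _)
    _ = max C 1 * (t₂ - t₁) ^ (1 - β * (θ₁ - θ₂ - 1) / 2) := by
        rw [mul_comm]; ring_nf
end G
end

section
/- There exists a universal constant C such that for all 0 < t₁ < t₂ one has ∫₀^{t₁} ( ∫_ℝ |G_{t₂−s}(x) − G_{t₁−s}(x)| dx )² ds ≤ C (t₂ − t₁). -/
/-! For `0 < a ≤ b`, `G a` and `G b` are the normalisations of the nested Gaussians
`exp (-x²/4a) ≤ exp (-x²/4b)`, of masses `√(4πa) ≤ √(4πb)`. Normalising nested nonnegative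
functions of masses `A ≤ B` costs at most `2 (1 - A/B)` in `L¹`, so
`‖G b - G a‖₁ ≤ 2 (1 - √(a/b)) ≤ 2 (b - a) / b`. With `a = t₁ - s`, `b = t₂ - s` the integrand is
at most `4 (t₂ - t₁)² / (t₂ - s)²`, whose integral over `(0, t₁)` is below `4 (t₂ - t₁)`. -/

open MeasureTheory Real Filter

open Set

theorem integral_abs_div_integral_sub_div_integral_le {α : Type*} [MeasurableSpace α]
    {μ : Measure α} {φ ψ : α → ℝ} (hφ : Integrable φ μ) (hψ : Integrable ψ μ)
    (hφ_nonneg : 0 ≤ φ) (hφψ : φ ≤ ψ) (hφ_pos : 0 < ∫ x, φ x ∂μ) :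
    ∫ x, |ψ x / ∫ y, ψ y ∂μ - φ x / ∫ y, φ y ∂μ| ∂μ
      ≤ 2 * (1 - (∫ x, φ x ∂μ) / ∫ x, ψ x ∂μ) := by
  set A := ∫ x, φ x ∂μ
  set B := ∫ x, ψ x ∂μ
  have hAB : A ≤ B := integral_mono hφ hψ hφψ
  have hB : 0 < B := hφ_pos.trans_le hAB
  have hinv : 0 ≤ A⁻¹ - B⁻¹ := sub_nonneg.2 (inv_anti₀ hφ_pos hAB)
  have hpt : ∀ x, |ψ x / B - φ x / A| ≤ (ψ x - φ x) / B + φ x * (A⁻¹ - B⁻¹) := fun x => by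
    have hexcess : 0 ≤ (ψ x - φ x) / B := div_nonneg (sub_nonneg.2 (hφψ x)) hB.le
    have hrescale : 0 ≤ φ x * (A⁻¹ - B⁻¹) := mul_nonneg (hφ_nonneg x) hinv
    calc |ψ x / B - φ x / A| = |(ψ x - φ x) / B - φ x * (A⁻¹ - B⁻¹)| := by ring_nf
      _ ≤ |(ψ x - φ x) / B| + |φ x * (A⁻¹ - B⁻¹)| := abs_sub _ _
      _ = (ψ x - φ x) / B + φ x * (A⁻¹ - B⁻¹) := by
        rw [abs_of_nonneg hexcess, abs_of_nonneg hrescale]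
  have hexcess : Integrable (fun x => (ψ x - φ x) / B) μ := (hψ.sub hφ).div_const B
  have hrescale : Integrable (fun x => φ x * (A⁻¹ - B⁻¹)) μ := hφ.mul_const _
  calc ∫ x, |ψ x / B - φ x / A| ∂μ
      ≤ ∫ x, ((ψ x - φ x) / B + φ x * (A⁻¹ - B⁻¹)) ∂μ :=
        integral_mono ((hψ.div_const B).sub (hφ.div_const A)).abs (hexcess.add hrescale) hpt
    _ = (B - A) / B + A * (A⁻¹ - B⁻¹) := by
        rw [integral_add hexcess hrescale, integral_div, integral_sub hψ hφ, integral_mul_const]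
    _ = 2 * (1 - A / B) := by field_simp; ring

theorem intervalIntegrable_inv_sub_sq {a b c : ℝ} (hc : c ∉ uIcc a b) :
    IntervalIntegrable (fun s => ((c - s) ^ 2)⁻¹) volume a b :=
  (ContinuousOn.inv₀ (by fun_prop) fun s hs =>
    pow_ne_zero 2 (sub_ne_zero.2 (ne_of_mem_of_not_mem hs hc).symm)).intervalIntegrable

theorem integral_inv_sub_sq {a b c : ℝ} (hc : c ∉ uIcc a b) :
    ∫ s in a..b, ((c - s) ^ 2)⁻¹ = (c - b)⁻¹ - (c - a)⁻¹ := by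
  refine intervalIntegral.integral_eq_sub_of_hasDerivAt (f := fun s => (c - s)⁻¹)
    (fun s hs => ?_) ?_
  · simpa using ((hasDerivAt_id' s).const_sub c).fun_inv
      (sub_ne_zero.2 (ne_of_mem_of_not_mem hs hc).symm)
  · exact intervalIntegrable_inv_sub_sq hc

theorem intervalIntegral_mono_of_nonneg_on_Ioo {f g : ℝ → ℝ} {a b : ℝ} (hab : a ≤ b)
    (hf : ∀ x ∈ Ioo a b, 0 ≤ f x) (hfg : ∀ x ∈ Ioo a b, f x ≤ g x)
    (hg : IntervalIntegrable g volume a b) :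
    ∫ x in a..b, f x ≤ ∫ x in a..b, g x := by
  simp only [intervalIntegral.integral_of_le hab, integral_Ioc_eq_integral_Ioo]
  exact setIntegral_mono_of_nonneg hf hfg (hg.1.mono_set Ioo_subset_Ioc_self)

theorem integrable_exp_neg_sq_div {c : ℝ} (hc : 0 < c) :
    Integrable fun x : ℝ => exp (-x ^ 2 / c) := by
  simpa [neg_div, div_eq_inv_mul] using integrable_exp_neg_mul_sq (inv_pos.2 hc)

theorem integral_exp_neg_sq_div (c : ℝ) :
    ∫ x : ℝ, exp (-x ^ 2 / c) = √(π * c) := by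
  rw [mul_comm]
  simpa [neg_div, div_eq_inv_mul] using integral_gaussian c⁻¹

theorem exp_neg_sq_div_le_of_le {a b : ℝ} (ha : 0 < a) (hab : a ≤ b) (x : ℝ) :
    exp (-x ^ 2 / a) ≤ exp (-x ^ 2 / b) := by
  rw [exp_le_exp, neg_div, neg_div, neg_le_neg_iff]
  gcongr

theorem G_eq_div_integral {t : ℝ} (ht : 0 < t) (x : ℝ) :
    G t x = exp (-x ^ 2 / (4 * t)) / ∫ y : ℝ, exp (-y ^ 2 / (4 * t)) := by
  rw [G, integral_exp_neg_sq_div, neg_div, rpow_neg (by positivity), ← sqrt_eq_rpow,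
    div_eq_inv_mul]
  ring_nf

theorem integral_abs_G_sub_le {a b : ℝ} (ha : 0 < a) (hab : a ≤ b) :
    ∫ x, |G b x - G a x| ≤ 2 * (b - a) / b := by
  have hb : 0 < b := ha.trans_le hab
  have hratio : a / b ≤ √(π * (4 * a)) / √(π * (4 * b)) := by
    rw [← sqrt_div' _ (by positivity), show π * (4 * a) / (π * (4 * b)) = a / b by field_simp]
    have hr0 : 0 ≤ a / b := by positivity
    have hr1 : a / b ≤ 1 := (div_le_one hb).2 hab
    exact (le_sqrt hr0 hr0).2 (by nlinarith)
  simp_rw [G_eq_div_integral ha, G_eq_div_integral hb]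
  calc _ ≤ 2 * (1 - √(π * (4 * a)) / √(π * (4 * b))) := by
        simpa only [integral_exp_neg_sq_div] using integral_abs_div_integral_sub_div_integral_le
          (integrable_exp_neg_sq_div (by positivity : 0 < 4 * a))
          (integrable_exp_neg_sq_div (by positivity : 0 < 4 * b))
          (fun x => (exp_pos _).le) (exp_neg_sq_div_le_of_le (by positivity) (by linarith))
          (by rw [integral_exp_neg_sq_div]; positivity)
    _ ≤ 2 * (1 - a / b) := by linarith
    _ = 2 * (b - a) / b := by field_simp

theorem heat_kernel_time_increment_L1_squared :
    ∃ C : ℝ, 0 < C ∧ ∀ t₁ t₂ : ℝ, 0 < t₁ → t₁ < t₂ →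
      ∫ s in (0:ℝ)..t₁,
          (∫ x : ℝ, |G (t₂ - s) x - G (t₁ - s) x|) ^ 2
        ≤ C * (t₂ - t₁) := by
  refine ⟨4, four_pos, fun t₁ t₂ ht₁ ht₁₂ => ?_⟩
  have hδ : t₂ - t₁ ≠ 0 := (sub_pos.2 ht₁₂).ne'
  have ht₂ : t₂ ∉ uIcc 0 t₁ := fun h => (uIcc_of_le ht₁.le ▸ h).2.not_gt ht₁₂
  have hbound : ∀ s ∈ Ioo 0 t₁, (∫ x, |G (t₂ - s) x - G (t₁ - s) x|) ^ 2
      ≤ 4 * (t₂ - t₁) ^ 2 * ((t₂ - s) ^ 2)⁻¹ := by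
    rintro s ⟨-, hs⟩
    calc _ ≤ (2 * (t₂ - s - (t₁ - s)) / (t₂ - s)) ^ 2 :=
          pow_le_pow_left₀ (integral_nonneg fun _ => abs_nonneg _)
            (integral_abs_G_sub_le (sub_pos.2 hs) (by linarith)) 2
      _ = _ := by rw [div_pow]; ring
  calc _ ≤ ∫ s in (0:ℝ)..t₁, 4 * (t₂ - t₁) ^ 2 * ((t₂ - s) ^ 2)⁻¹ :=
        intervalIntegral_mono_of_nonneg_on_Ioo ht₁.le (fun _ _ => sq_nonneg _) hbound
          ((intervalIntegrable_inv_sub_sq ht₂).const_mul _)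
    _ = 4 * (t₂ - t₁) - 4 * (t₂ - t₁) ^ 2 / t₂ := by
        rw [intervalIntegral.integral_const_mul, integral_inv_sub_sq ht₂, sub_zero]
        field_simp
    _ ≤ 4 * (t₂ - t₁) := sub_le_self _ (div_nonneg (by positivity) (by linarith))
end

section
/- Let f ∈ L²(ℝ) be non-negative. Then there exists a universal constant C such that for all t > 0, all ε > 0 and all x ∈ ℝ one has ∫₀^{t} ∫₀^{∞} ∫_ℝ | ∂G_{t−s}/∂v (x−v) | ( ∫_y^{∞} G_ε(v−z) |v−z|^{1/2} dz ) f(y)² dv dy ds ≤ C ‖f‖²_{L²(ℝ)} t^{1/2} ε^{1/4}. -/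
open MeasureTheory Real Filter

/-!
For fixed `s`, the `z`-integral is at most `∫ G_ε(w) |w|^{1/2} dw ≤ (3/2) ε^{1/4}`: by AM-GM,
`|w|^{1/2} ≤ (c + |w|/c)/2` with `c = ε^{1/4}`, and the first absolute moment of `G_τ` is at most
`2 τ^{1/2}`. Since `∂G_τ(w) = -(w / 2τ) G_τ(w)`, the same moment gives `‖∂G_τ‖₁ ≤ τ^{-1/2}`. So the
`s`-slice is at most `(3/2) ε^{1/4} ‖f‖² (t - s)^{-1/2}`, and `∫₀ᵗ (t - s)^{-1/2} ds = 2 t^{1/2}`.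
-/

open Set

lemma integral_abs_mul_exp_neg_mul_sq {b : ℝ} (hb : 0 < b) :
    ∫ u : ℝ, |u| * exp (-b * u ^ 2) = b⁻¹ := by
  have hsymm := integral_comp_abs (f := fun x : ℝ => x * exp (-b * x ^ 2))
  simp only [sq_abs] at hsymm
  have hrpow : ∫ x in Ioi (0:ℝ), x * exp (-b * x ^ 2)
      = ∫ x in Ioi (0:ℝ), x ^ (1:ℝ) * exp (-b * x ^ (2:ℝ)) :=
    setIntegral_congr_fun measurableSet_Ioi fun x _ => by rw [rpow_one, rpow_two]
  rw [hsymm, hrpow, integral_rpow_mul_exp_neg_mul_rpow (by norm_num) (by norm_num) hb]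
  norm_num [rpow_neg_one]
  ring

lemma integrable_abs_mul_exp_neg_mul_sq {b : ℝ} (hb : 0 < b) :
    Integrable fun u : ℝ => |u| * exp (-b * u ^ 2) :=
  (integrable_mul_exp_neg_mul_sq hb).abs.congr
    (Eventually.of_forall fun u => by simp [abs_mul, abs_of_pos (exp_pos _)])

lemma rpow_half_le_add_div {a c : ℝ} (ha : 0 ≤ a) (hc : 0 < c) :
    a ^ ((1:ℝ)/2) ≤ (c + a / c) / 2 := by
  rw [← sqrt_eq_rpow, le_div_iff₀ two_pos, ← sub_nonneg]
  have : c + a / c - √a * 2 = (c - √a) ^ 2 / c := by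
    field_simp
    rw [sub_sq, sq_sqrt ha]
    ring
  rw [this]
  positivity

section HeatKernel

variable {τ : ℝ}

lemma G_eq_mul_exp (τ w : ℝ) :
    G τ w = (4 * π * τ) ^ (-(1:ℝ)/2) * exp (-(4 * τ)⁻¹ * w ^ 2) := by
  simp only [G]
  congr 2
  ring

lemma G_nonneg_s14 (hτ : 0 ≤ τ) (w : ℝ) : 0 ≤ G τ w := by
  unfold G
  have : 0 ≤ 4 * π * τ := by positivity
  positivity

lemma continuous_G (τ : ℝ) : Continuous (G τ) := by
  unfold G
  fun_prop

lemma integrable_G (hτ : 0 < τ) : Integrable (G τ) := by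
  rw [funext (G_eq_mul_exp τ)]
  exact (integrable_exp_neg_mul_sq (by positivity)).const_mul _

lemma integral_G (hτ : 0 < τ) : ∫ w, G τ w = 1 := by
  rw [funext (G_eq_mul_exp τ), integral_const_mul, integral_gaussian, div_inv_eq_mul,
    show π * (4 * τ) = 4 * π * τ by ring, sqrt_eq_rpow, ← rpow_add (by positivity : (0:ℝ) < 4 * π * τ)]
  norm_num

lemma G_mul_abs_eq (τ w : ℝ) :
    G τ w * |w| = (4 * π * τ) ^ (-(1:ℝ)/2) * (|w| * exp (-(4 * τ)⁻¹ * w ^ 2)) := by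
  rw [G_eq_mul_exp]
  ring

lemma integrable_G_mul_abs (hτ : 0 < τ) : Integrable fun w => G τ w * |w| := by
  simp_rw [G_mul_abs_eq]
  exact (integrable_abs_mul_exp_neg_mul_sq (by positivity)).const_mul _

lemma integral_G_mul_abs_le (hτ : 0 < τ) : ∫ w, G τ w * |w| ≤ 2 * τ ^ ((1:ℝ)/2) := by
  simp_rw [G_mul_abs_eq, integral_const_mul,
    integral_abs_mul_exp_neg_mul_sq (by positivity : 0 < (4 * τ)⁻¹), inv_inv]
  have h4 : (4:ℝ) ^ ((1:ℝ)/2) = 2 := by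
    rw [← sqrt_eq_rpow, show (4:ℝ) = 2 ^ 2 by norm_num, sqrt_sq zero_le_two]
  calc (4 * π * τ) ^ (-(1:ℝ)/2) * (4 * τ) ≤ (4 * τ) ^ (-(1:ℝ)/2) * (4 * τ) := by
        refine mul_le_mul_of_nonneg_right ?_ (by positivity)
        exact rpow_le_rpow_of_nonpos (by positivity) (by nlinarith [pi_gt_three]) (by norm_num)
    _ = 2 * τ ^ ((1:ℝ)/2) := by
        rw [← rpow_add_one (by positivity), mul_rpow zero_le_four hτ.le]
        norm_num [h4]

lemma hasDerivAt_G_s14 (τ w : ℝ) : HasDerivAt (G τ) (-(w / (2 * τ)) * G τ w) w := by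
  have h : HasDerivAt (fun y => -y ^ 2 / (4 * τ)) (-(2 * w) / (4 * τ)) w := by
    simpa using (hasDerivAt_pow 2 w).neg.div_const (4 * τ)
  exact (h.exp.const_mul _).congr_deriv (by simp only [G]; ring)

lemma G_mul_abs_rpow_nonneg (hτ : 0 ≤ τ) (w r : ℝ) : 0 ≤ G τ w * |w| ^ r :=
  mul_nonneg (G_nonneg_s14 hτ w) (by positivity)

lemma integrable_G_mul_abs_rpow_half (hτ : 0 < τ) :
    Integrable fun w => G τ w * |w| ^ ((1:ℝ)/2) := by
  refine (((integrable_G hτ).add (integrable_G_mul_abs hτ)).div_const 2).mono' ?_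
    (Eventually.of_forall fun w => ?_)
  · exact ((continuous_G τ).mul
      (continuous_abs.rpow_const fun _ => Or.inr (by norm_num))).aestronglyMeasurable
  · rw [norm_of_nonneg (G_mul_abs_rpow_nonneg hτ.le w _)]
    calc G τ w * |w| ^ ((1:ℝ)/2) ≤ G τ w * ((1 + |w| / 1) / 2) :=
          mul_le_mul_of_nonneg_left (rpow_half_le_add_div (abs_nonneg w) one_pos)
            (G_nonneg_s14 hτ.le w)
      _ = (G τ w + G τ w * |w|) / 2 := by ring

lemma integral_G_mul_abs_rpow_half_le (hτ : 0 < τ) :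
    ∫ w, G τ w * |w| ^ ((1:ℝ)/2) ≤ 3/2 * τ ^ ((1:ℝ)/4) := by
  set c := τ ^ ((1:ℝ)/4)
  have hc : 0 < c := by positivity
  have hc2 : τ ^ ((1:ℝ)/2) = c * c := by rw [← rpow_add hτ]; norm_num
  calc ∫ w, G τ w * |w| ^ ((1:ℝ)/2)
      ≤ ∫ w, (c * G τ w + c⁻¹ * (G τ w * |w|)) / 2 := by
        refine integral_mono (integrable_G_mul_abs_rpow_half hτ)
          ((((integrable_G hτ).const_mul c).add
            ((integrable_G_mul_abs hτ).const_mul c⁻¹)).div_const 2) fun w => ?_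
        calc G τ w * |w| ^ ((1:ℝ)/2) ≤ G τ w * ((c + |w| / c) / 2) :=
              mul_le_mul_of_nonneg_left (rpow_half_le_add_div (abs_nonneg w) hc)
                (G_nonneg_s14 hτ.le w)
          _ = (c * G τ w + c⁻¹ * (G τ w * |w|)) / 2 := by ring
    _ = (c + c⁻¹ * ∫ w, G τ w * |w|) / 2 := by
        rw [integral_div, integral_add ((integrable_G hτ).const_mul c)
          ((integrable_G_mul_abs hτ).const_mul c⁻¹), integral_const_mul, integral_const_mul,
          integral_G hτ, mul_one]
    _ ≤ (c + c⁻¹ * (2 * (c * c))) / 2 := by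
        gcongr
        exact hc2 ▸ integral_G_mul_abs_le hτ
    _ = 3/2 * c := by field_simp; ring

lemma abs_deriv_G (hτ : 0 < τ) (w : ℝ) : |deriv (G τ) w| = (2 * τ)⁻¹ * (G τ w * |w|) := by
  rw [(hasDerivAt_G_s14 τ w).deriv, abs_mul, abs_neg, abs_div, abs_of_pos (by positivity : 0 < 2 * τ),
    abs_of_nonneg (G_nonneg_s14 hτ.le w)]
  ring

lemma integrable_abs_deriv_G (hτ : 0 < τ) : Integrable fun w => |deriv (G τ) w| := by
  simp_rw [abs_deriv_G hτ]
  exact (integrable_G_mul_abs hτ).const_mul _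

lemma integral_abs_deriv_G_le (hτ : 0 < τ) : ∫ w, |deriv (G τ) w| ≤ τ ^ (-(1:ℝ)/2) := by
  simp_rw [abs_deriv_G hτ, integral_const_mul]
  calc (2 * τ)⁻¹ * ∫ w, G τ w * |w| ≤ (2 * τ)⁻¹ * (2 * τ ^ ((1:ℝ)/2)) := by
        gcongr
        exact integral_G_mul_abs_le hτ
    _ = τ ^ (-(1:ℝ)/2) := by
        rw [show (-(1:ℝ)/2) = 1/2 - 1 by norm_num, rpow_sub_one hτ.ne']
        field_simp

lemma setIntegral_Ioi_G_mul_abs_rpow_nonneg (hτ : 0 ≤ τ) (v y r : ℝ) :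
    0 ≤ ∫ z in Ioi y, G τ (v - z) * |v - z| ^ r :=
  setIntegral_nonneg measurableSet_Ioi fun _ _ => G_mul_abs_rpow_nonneg hτ _ _

lemma setIntegral_Ioi_G_mul_abs_rpow_half_le (hτ : 0 < τ) (v y : ℝ) :
    ∫ z in Ioi y, G τ (v - z) * |v - z| ^ ((1:ℝ)/2) ≤ 3/2 * τ ^ ((1:ℝ)/4) :=
  calc ∫ z in Ioi y, G τ (v - z) * |v - z| ^ ((1:ℝ)/2)
      ≤ ∫ z, G τ (v - z) * |v - z| ^ ((1:ℝ)/2) :=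
        setIntegral_le_integral ((integrable_G_mul_abs_rpow_half hτ).comp_sub_left v)
          (Eventually.of_forall fun _ => G_mul_abs_rpow_nonneg hτ.le _ _)
    _ = ∫ w, G τ w * |w| ^ ((1:ℝ)/2) :=
        integral_sub_left_eq_self (fun w => G τ w * |w| ^ ((1:ℝ)/2)) volume v
    _ ≤ 3/2 * τ ^ ((1:ℝ)/4) := integral_G_mul_abs_rpow_half_le hτ

end HeatKernel

lemma integral_integral_mul_mul_le {α β : Type*} [MeasurableSpace α] [MeasurableSpace β]
    [Nonempty β] {μ : Measure α} {ν : Measure β} {k : β → ℝ} {W : β → α → ℝ} {g : α → ℝ}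
    {A B : ℝ} (hk0 : ∀ v, 0 ≤ k v) (hk : Integrable k ν) (hkA : ∫ v, k v ∂ν ≤ A)
    (hW0 : ∀ v y, 0 ≤ W v y) (hWB : ∀ v y, W v y ≤ B) (hg0 : ∀ y, 0 ≤ g y)
    (hg : Integrable g μ) :
    ∫ y, ∫ v, k v * W v y * g y ∂ν ∂μ ≤ A * B * ∫ y, g y ∂μ := by
  obtain ⟨v₀⟩ := ‹Nonempty β›
  have hkW : ∀ y, ∫ v, k v * W v y ∂ν ≤ A * B := fun y =>
    calc ∫ v, k v * W v y ∂ν ≤ ∫ v, k v * B ∂ν :=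
          integral_mono_of_nonneg (Eventually.of_forall fun v => mul_nonneg (hk0 v) (hW0 v y))
            (hk.mul_const B)
            (Eventually.of_forall fun v => mul_le_mul_of_nonneg_left (hWB v y) (hk0 v))
      _ ≤ A * B := by
        rw [integral_mul_const]
        exact mul_le_mul_of_nonneg_right hkA ((hW0 v₀ y).trans (hWB v₀ y))
  calc ∫ y, ∫ v, k v * W v y * g y ∂ν ∂μ ≤ ∫ y, A * B * g y ∂μ := by
        refine integral_mono_of_nonneg (Eventually.of_forall fun y => ?_) (hg.const_mul _)
          (Eventually.of_forall fun y => ?_)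
        · exact integral_nonneg fun v => mul_nonneg (mul_nonneg (hk0 v) (hW0 v y)) (hg0 y)
        · dsimp only
          rw [integral_mul_const]
          exact mul_le_mul_of_nonneg_right (hkW y) (hg0 y)
    _ = A * B * ∫ y, g y ∂μ := integral_const_mul _ _

lemma integral_sub_rpow_neg_half (t : ℝ) :
    ∫ s in (0:ℝ)..t, (t - s) ^ (-(1:ℝ)/2) = 2 * t ^ ((1:ℝ)/2) := by
  rw [intervalIntegral.integral_comp_sub_left (fun u => u ^ (-(1:ℝ)/2)) t, sub_self, sub_zero,
    integral_rpow (Or.inl (by norm_num)), zero_rpow (by norm_num)]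
  norm_num
  ring

lemma intervalIntegrable_sub_rpow_neg_half (t : ℝ) :
    IntervalIntegrable (fun s => (t - s) ^ (-(1:ℝ)/2)) volume 0 t := by
  simpa using (intervalIntegral.intervalIntegrable_rpow' (a := 0) (b := t)
    (by norm_num : -1 < -(1:ℝ)/2)).comp_sub_left t |>.symm

lemma intervalIntegral.integral_mono_of_nonneg_Ioo {μ : Measure ℝ} [NullSingletonClass μ]
    {f g : ℝ → ℝ} {a b : ℝ} (hab : a ≤ b) (hg : IntervalIntegrable g μ a b)
    (hf0 : ∀ x ∈ Ioo a b, 0 ≤ f x) (hfg : ∀ x ∈ Ioo a b, f x ≤ g x) :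
    ∫ x in a..b, f x ∂μ ≤ ∫ x in a..b, g x ∂μ := by
  simp only [intervalIntegral.integral_of_le hab, integral_Ioc_eq_integral_Ioo]
  exact integral_mono_of_nonneg (ae_restrict_of_forall_mem measurableSet_Ioo hf0)
    (hg.1.mono_set Ioo_subset_Ioc_self) (ae_restrict_of_forall_mem measurableSet_Ioo hfg)

theorem heat_kernel_derivative_mollification_estimate_general
    (f : ℝ → ℝ)
    (hf2 : MeasureTheory.Integrable (fun y => f y ^ 2)) :
    ∃ C : ℝ, 0 < C ∧ ∀ t ε x : ℝ, 0 < t → 0 < ε →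
      ∫ s in (0:ℝ)..t, ∫ y in Set.Ioi (0:ℝ), ∫ v : ℝ,
          |deriv (G (t - s)) (x - v)|
            * (∫ z in Set.Ioi y, G ε (v - z) * |v - z| ^ ((1:ℝ)/2)) * f y ^ 2
        ≤ C * (∫ y : ℝ, f y ^ 2) * t ^ ((1:ℝ)/2) * ε ^ ((1:ℝ)/4) := by
  refine ⟨3, by norm_num, fun t ε x ht hε => ?_⟩
  set I := ∫ y : ℝ, f y ^ 2
  have hslice : ∀ s ∈ Ioo 0 t,
      ∫ y in Ioi (0:ℝ), ∫ v : ℝ, |deriv (G (t - s)) (x - v)|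
          * (∫ z in Ioi y, G ε (v - z) * |v - z| ^ ((1:ℝ)/2)) * f y ^ 2
        ≤ 3/2 * ε ^ ((1:ℝ)/4) * I * (t - s) ^ (-(1:ℝ)/2) := fun s hs => by
    have hτ : 0 < t - s := sub_pos.2 hs.2
    calc _ ≤ (t - s) ^ (-(1:ℝ)/2) * (3/2 * ε ^ ((1:ℝ)/4)) * ∫ y in Ioi (0:ℝ), f y ^ 2 :=
          integral_integral_mul_mul_le (fun _ => abs_nonneg _)
            ((integrable_abs_deriv_G hτ).comp_sub_left x)
            ((integral_sub_left_eq_self _ _ x).trans_le (integral_abs_deriv_G_le hτ))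
            (fun v y => setIntegral_Ioi_G_mul_abs_rpow_nonneg hε.le v y _)
            (setIntegral_Ioi_G_mul_abs_rpow_half_le hε) (fun _ => sq_nonneg _) hf2.integrableOn
      _ ≤ (t - s) ^ (-(1:ℝ)/2) * (3/2 * ε ^ ((1:ℝ)/4)) * I := by
          gcongr
          exact setIntegral_le_integral hf2 (Eventually.of_forall fun _ => sq_nonneg _)
      _ = _ := by ring
  calc _ ≤ ∫ s in (0:ℝ)..t, 3/2 * ε ^ ((1:ℝ)/4) * I * (t - s) ^ (-(1:ℝ)/2) :=
        intervalIntegral.integral_mono_of_nonneg_Ioo ht.le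
          ((intervalIntegrable_sub_rpow_neg_half t).const_mul _)
          (fun _ _ => setIntegral_nonneg measurableSet_Ioi fun y _ => integral_nonneg fun v =>
            mul_nonneg (mul_nonneg (abs_nonneg _)
              (setIntegral_Ioi_G_mul_abs_rpow_nonneg hε.le v y _)) (sq_nonneg _))
          hslice
    _ = 3 * I * t ^ ((1:ℝ)/2) * ε ^ ((1:ℝ)/4) := by
        rw [intervalIntegral.integral_const_mul, integral_sub_rpow_neg_half]
        ring

theorem heat_kernel_derivative_mollification_estimate
    (f : ℝ → ℝ) (hfm : Measurable f) (hf0 : ∀ y, 0 ≤ f y)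
    (hf2 : MeasureTheory.Integrable (fun y => f y ^ 2)) :
    ∃ C : ℝ, 0 < C ∧ ∀ t ε x : ℝ, 0 < t → 0 < ε →
      ∫ s in (0:ℝ)..t, ∫ y in Set.Ioi (0:ℝ), ∫ v : ℝ,
          |deriv (G (t - s)) (x - v)|
            * (∫ z in Set.Ioi y, G ε (v - z) * |v - z| ^ ((1:ℝ)/2)) * f y ^ 2
        ≤ C * (∫ y : ℝ, f y ^ 2) * t ^ ((1:ℝ)/2) * ε ^ ((1:ℝ)/4) :=
  heat_kernel_derivative_mollification_estimate_general f hf2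
end

section
/- Let q > 2 and let f ∈ L^q(ℝ) be non-negative. Then there exists a constant C, depending only on q, such that for all t > 0 and all x ∈ ℝ one has ∫₀^{t} ∫_ℝ f(y)² G_{t−s}(x−y)² dy ds ≤ C ‖f‖²_{L^q(ℝ)} t^{1/2 − 1/q}. -/
/-!
Hölder's inequality with the exponents `q / 2` and `r = q / (q - 2)` bounds the inner integral by
`‖f‖_q ^ 2 * ‖G_τ(x - ·) ^ 2‖_r`, and a Gaussian integral gives
`‖G_τ(x - ·) ^ 2‖_r = c_q τ^(α - 1)` with `α = 1 / 2 - 1 / q`. Since `q > 2`, `α > 0`, so the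
singularity at `s = t` is integrable and `∫₀ᵗ (t - s)^(α - 1) ds = t^α / α`.
-/

open MeasureTheory Real Filter

open Set

lemma memLp_ofReal_of_integrable_norm_rpow {α E : Type*} [MeasurableSpace α] {μ : Measure α}
    [NormedAddCommGroup E] {g : α → E} {r : ℝ} (hr : 0 < r) (hg : AEStronglyMeasurable g μ)
    (h : Integrable (fun y => ‖g y‖ ^ r) μ) : MemLp g (ENNReal.ofReal r) μ := by
  rw [← integrable_norm_rpow_iff hg (by simpa using hr) ENNReal.ofReal_ne_top,
    ENNReal.toReal_ofReal hr.le]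
  exact h

lemma integral_sq_mul_le_of_holderConjugate {α : Type*} [MeasurableSpace α] {μ : Measure α}
    {q r : ℝ} (hqr : (q / 2).HolderConjugate r) {f g : α → ℝ}
    (hfm : AEStronglyMeasurable f μ) (hf0 : ∀ y, 0 ≤ f y) (hfq : Integrable (fun y => f y ^ q) μ)
    (hgm : AEStronglyMeasurable g μ) (hg0 : ∀ y, 0 ≤ g y) (hgr : Integrable (fun y => g y ^ r) μ) :
    ∫ y, f y ^ 2 * g y ∂μ ≤ (∫ y, f y ^ q ∂μ) ^ (2 / q) * (∫ y, g y ^ r ∂μ) ^ (1 / r) := by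
  have hsq : ∀ y, (f y ^ 2) ^ (q / 2) = f y ^ q := fun y => by
    rw [← rpow_natCast, ← rpow_mul (hf0 y)]; congr 1; push_cast; ring
  have hf2 : MemLp (fun y => f y ^ 2) (ENNReal.ofReal (q / 2)) μ := by
    refine memLp_ofReal_of_integrable_norm_rpow hqr.pos (hfm.pow 2) (hfq.congr ?_)
    filter_upwards with y
    rw [norm_of_nonneg (by positivity), hsq]
  have hg : MemLp g (ENNReal.ofReal r) μ := by
    refine memLp_ofReal_of_integrable_norm_rpow hqr.symm.pos hgm (hgr.congr ?_)
    filter_upwards with y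
    rw [norm_of_nonneg (hg0 y)]
  calc ∫ y, f y ^ 2 * g y ∂μ
      ≤ (∫ y, (f y ^ 2) ^ (q / 2) ∂μ) ^ (1 / (q / 2)) * (∫ y, g y ^ r ∂μ) ^ (1 / r) :=
        integral_mul_le_Lp_mul_Lq_of_nonneg hqr (.of_forall fun y => by positivity)
          (.of_forall hg0) hf2 hg
    _ = (∫ y, f y ^ q ∂μ) ^ (2 / q) * (∫ y, g y ^ r ∂μ) ^ (1 / r) := by
        simp only [hsq, one_div_div]

lemma intervalIntegral_mono_of_nonneg_of_le_Ioo {f g : ℝ → ℝ} {a b : ℝ} (hab : a ≤ b)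
    (hf : ∀ x ∈ Ioo a b, 0 ≤ f x) (h : ∀ x ∈ Ioo a b, f x ≤ g x)
    (hg : IntervalIntegrable g volume a b) :
    ∫ x in a..b, f x ≤ ∫ x in a..b, g x := by
  simp only [intervalIntegral.integral_of_le hab, integral_Ioc_eq_integral_Ioo]
  exact setIntegral_mono_of_nonneg hf h (hg.1.mono_set Ioo_subset_Ioc_self)

section TimeIntegral

variable {α t : ℝ}

lemma intervalIntegrable_sub_rpow (hα : 0 < α) :
    IntervalIntegrable (fun s => (t - s) ^ (α - 1)) volume 0 t := by
  simpa using ((intervalIntegral.intervalIntegrable_rpow' (by linarith : -1 < α - 1)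
    (a := 0) (b := t)).comp_sub_left t).symm

lemma integral_sub_rpow (hα : 0 < α) : ∫ s in 0..t, (t - s) ^ (α - 1) = t ^ α / α := by
  rw [intervalIntegral.integral_comp_sub_left (fun u => u ^ (α - 1)), sub_self, sub_zero,
    integral_rpow (Or.inl (by linarith)), sub_add_cancel, zero_rpow hα.ne', sub_zero]

end TimeIntegral

section HeatKernel

variable {τ : ℝ}

lemma G_sq_rpow (hτ : 0 < τ) (r z : ℝ) :
    (G τ z ^ 2) ^ r = (4 * π * τ) ^ (-r) * exp (-(r / (2 * τ)) * z ^ 2) := by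
  rw [G, mul_pow, ← rpow_natCast, ← rpow_natCast (exp _), ← rpow_mul (by positivity),
    mul_rpow (by positivity) (by positivity), ← rpow_mul (by positivity),
    ← rpow_mul (exp_nonneg _), rpow_def_of_pos (exp_pos _), log_exp]
  congr 2
  · push_cast; ring
  · field_simp; ring

lemma integrable_G_sq_rpow (hτ : 0 < τ) {r : ℝ} (hr : 0 < r) (x : ℝ) :
    Integrable fun y => (G τ (x - y) ^ 2) ^ r := by
  simp only [G_sq_rpow hτ]
  refine Integrable.const_mul ?_ _
  exact (integrable_exp_neg_mul_sq (by positivity)).comp_sub_left x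

lemma integral_G_sq_rpow (hτ : 0 < τ) (r x : ℝ) :
    ∫ y, (G τ (x - y) ^ 2) ^ r = (4 * π * τ) ^ (-r) * √(π / (r / (2 * τ))) := by
  simp only [G_sq_rpow hτ]
  rw [integral_const_mul, integral_sub_left_eq_self (fun z => exp (-(r / (2 * τ)) * z ^ 2)),
    integral_gaussian]

lemma integral_G_sq_rpow_rpow_one_div (hτ : 0 < τ) {r : ℝ} (hr : 0 < r) (x : ℝ) :
    (∫ y, (G τ (x - y) ^ 2) ^ r) ^ (1 / r)
      = (4 * π)⁻¹ * (2 * π / r) ^ (1 / (2 * r)) * τ ^ (1 / (2 * r) - 1) := by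
  have hsqrt : √(π / (r / (2 * τ))) = (2 * π / r) ^ (1 / 2 : ℝ) * τ ^ (1 / 2 : ℝ) := by
    rw [sqrt_eq_rpow, ← mul_rpow (by positivity) hτ.le]
    congr 1
    field_simp
  have h4π : 0 < 4 * π := by positivity
  have h2π : 0 < 2 * π / r := by positivity
  rw [integral_G_sq_rpow hτ, hsqrt, mul_rpow h4π.le hτ.le, mul_mul_mul_comm, ← rpow_add hτ,
    mul_rpow (by positivity) (rpow_nonneg hτ.le _),
    mul_rpow (rpow_nonneg h4π.le _) (rpow_nonneg h2π.le _), ← rpow_mul h4π.le,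
    ← rpow_mul h2π.le, ← rpow_mul hτ.le]
  have hneg : -r * (1 / r) = -1 := by field_simp
  have hhalf : 1 / 2 * (1 / r) = 1 / (2 * r) := by field_simp
  rw [hneg, hhalf, rpow_neg_one]
  congr 2
  field_simp
  ring

end HeatKernel

lemma integral_sq_mul_G_sq_le {q r : ℝ} (hqr : (q / 2).HolderConjugate r) {f : ℝ → ℝ}
    (hfm : Measurable f) (hf0 : ∀ y, 0 ≤ f y) (hfq : Integrable (fun y => f y ^ q))
    {τ : ℝ} (hτ : 0 < τ) (x : ℝ) :
    ∫ y, f y ^ 2 * G τ (x - y) ^ 2 ≤ (∫ y, f y ^ q) ^ (2 / q)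
      * ((4 * π)⁻¹ * (2 * π / r) ^ (1 / 2 - 1 / q) * τ ^ (1 / 2 - 1 / q - 1)) := by
  have hexp : 1 / (2 * r) = 1 / 2 - 1 / q := by
    have := hqr.inv_add_inv_eq_one
    field_simp at this ⊢
    linarith
  have hGm : AEStronglyMeasurable (fun y => G τ (x - y) ^ 2) := by
    unfold G; fun_prop
  rw [← hexp, ← integral_G_sq_rpow_rpow_one_div hτ hqr.symm.pos]
  exact integral_sq_mul_le_of_holderConjugate hqr hfm.aestronglyMeasurable hf0 hfq hGm
    (fun y => by positivity) (integrable_G_sq_rpow hτ hqr.symm.pos x)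

theorem heat_kernel_squared_convolution_estimate
    (q : ℝ) (hq : 2 < q) (f : ℝ → ℝ) (hfm : Measurable f) (hf0 : ∀ y, 0 ≤ f y)
    (hfq : MeasureTheory.Integrable (fun y => f y ^ q)) :
    ∃ C : ℝ, 0 < C ∧ ∀ t x : ℝ, 0 < t →
      ∫ s in (0:ℝ)..t, ∫ y : ℝ, f y ^ 2 * G (t - s) (x - y) ^ 2
        ≤ C * ((∫ y : ℝ, f y ^ q) ^ (1/q)) ^ 2 * t ^ ((1:ℝ)/2 - 1/q) := by
  have hqr := Real.HolderConjugate.conjExponent (by linarith : 1 < q / 2)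
  set r := (q / 2).conjExponent
  have hα : 0 < 1 / 2 - 1 / q := sub_pos.2 (one_div_lt_one_div_of_lt two_pos hq)
  set α : ℝ := 1 / 2 - 1 / q
  set K := (4 * π)⁻¹ * (2 * π / r) ^ α
  have hK : 0 < K := by have := hqr.symm.pos; positivity
  set B := ∫ y, f y ^ q
  have hB : 0 ≤ B := integral_nonneg fun y => rpow_nonneg (hf0 y) q
  refine ⟨K / α, by positivity, fun t x ht => ?_⟩
  calc ∫ s in (0:ℝ)..t, ∫ y, f y ^ 2 * G (t - s) (x - y) ^ 2
      ≤ ∫ s in (0:ℝ)..t, B ^ (2 / q) * K * (t - s) ^ (α - 1) := by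
        refine intervalIntegral_mono_of_nonneg_of_le_Ioo ht.le
          (fun s _ => integral_nonneg fun y => by positivity) (fun s hs => ?_)
          ((intervalIntegrable_sub_rpow hα).const_mul _)
        rw [mul_assoc]
        exact integral_sq_mul_G_sq_le hqr hfm hf0 hfq (sub_pos.2 hs.2) x
    _ = K / α * (B ^ (1 / q)) ^ 2 * t ^ α := by
        rw [intervalIntegral.integral_const_mul, integral_sub_rpow hα,
          ← rpow_mul_natCast hB]
        ring_nf
end
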